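/- arXiv:2601.04840 — 2 statements merged into one kernel-verified Lean document; each statement's English description precedes it below -/
import Mathlib

section
/- For increasing events A_1, …, A_n in a probability space satisfying the FKG inequality for increasing events, max_{i=1,…,n} P(A_i) ≥ 1 − (1 − P(A_1 ∪ ⋯ ∪ A_n))^{1/n}. -/
open MeasureTheory

/-- **Square-root trick.** In a probability space carrying a partial order for which the
FKG/Harris inequality holds for increasing (measurable upper) events, for any increasing
events `A₁, …, A_n` (`n ≥ 1`) one has
`max_i P(A_i) ≥ 1 − (1 − P(A₁ ∪ ⋯ ∪ A_n))^{1/n}`. -/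
theorem square_root_trick {Ω : Type*} [MeasurableSpace Ω] [PartialOrder Ω]
    (P : Measure Ω) [IsProbabilityMeasure P]
    (hFKG : ∀ A B : Set Ω, MeasurableSet A → MeasurableSet B →
      IsUpperSet A → IsUpperSet B →
      (P A).toReal * (P B).toReal ≤ (P (A ∩ B)).toReal)
    (n : ℕ) (hn : 1 ≤ n) (A : Fin n → Set Ω)
    (hmeas : ∀ i, MeasurableSet (A i)) (hup : ∀ i, IsUpperSet (A i)) :
    ∃ i, 1 - (1 - (P (⋃ j, A j)).toReal) ^ ((1:ℝ) / n) ≤ (P (A i)).toReal := by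
  have hfin : ∀ S : Set Ω, P S ≠ ⊤ := fun S => measure_ne_top P S
  have hle1 : ∀ S : Set Ω, (P S).toReal ≤ 1 := by
    intro S
    simpa using ENNReal.toReal_mono ENNReal.one_ne_top (prob_le_one (μ := P) (s := S))
  -- key: FKG for complements (union form)
  have key : ∀ S T : Set Ω, MeasurableSet S → MeasurableSet T → IsUpperSet S → IsUpperSet T →
      (1 - (P S).toReal) * (1 - (P T).toReal) ≤ 1 - (P (S ∪ T)).toReal := by
    intro S T mS mT uS uT
    have hie : P (S ∪ T) + P (S ∩ T) = P S + P T := measure_union_add_inter S mT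
    have hie' : (P (S ∪ T)).toReal + (P (S ∩ T)).toReal
        = (P S).toReal + (P T).toReal := by
      rw [← ENNReal.toReal_add (hfin _) (hfin _), ← ENNReal.toReal_add (hfin _) (hfin _), hie]
    have hf := hFKG S T mS mT uS uT
    nlinarith [hf]
  -- induction: 1 - P(⋃ i ∈ s, A i) ≥ ∏ i ∈ s, (1 - P (A i))
  have main : ∀ s : Finset (Fin n),
      (∏ i ∈ s, (1 - (P (A i)).toReal)) ≤ 1 - (P (⋃ i ∈ s, A i)).toReal := by
    intro s
    induction s using Finset.induction_on with
    | empty => simp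
    | @insert j s hj ih =>
      have mU : MeasurableSet (⋃ i ∈ s, A i) := MeasurableSet.biUnion s.countable_toSet
        (fun i _ => hmeas i)
      have uU : IsUpperSet (⋃ i ∈ s, A i) := isUpperSet_iUnion₂ (fun i _ => hup i)
      have hk := key (A j) (⋃ i ∈ s, A i) (hmeas j) mU (hup j) uU
      rw [Finset.prod_insert hj, Finset.set_biUnion_insert]
      calc (1 - (P (A j)).toReal) * ∏ i ∈ s, (1 - (P (A i)).toReal)
          ≤ (1 - (P (A j)).toReal) * (1 - (P (⋃ i ∈ s, A i)).toReal) := by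
            apply mul_le_mul_of_nonneg_left ih (by linarith [hle1 (A j)])
        _ ≤ _ := hk
  -- pick the maximizer
  have hne : (Finset.univ : Finset (Fin n)).Nonempty := by
    have : Nonempty (Fin n) := ⟨⟨0, hn⟩⟩
    exact Finset.univ_nonempty
  obtain ⟨i, -, hi⟩ := Finset.exists_max_image Finset.univ (fun i => (P (A i)).toReal) hne
  refine ⟨i, ?_⟩
  set m := (P (A i)).toReal with hm
  have hm0 : 0 ≤ m := ENNReal.toReal_nonneg
  have hm1 : m ≤ 1 := hle1 _
  have hprod : (1 - m) ^ n ≤ 1 - (P (⋃ j, A j)).toReal := by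
    have h1 : (∏ _j ∈ (Finset.univ : Finset (Fin n)), (1 - m))
        ≤ ∏ j ∈ (Finset.univ : Finset (Fin n)), (1 - (P (A j)).toReal) := by
      apply Finset.prod_le_prod
      · intro j _; linarith
      · intro j _; have := hi j (Finset.mem_univ j); linarith
    have h2 := main Finset.univ
    have h3 : (⋃ j ∈ (Finset.univ : Finset (Fin n)), A j) = ⋃ j, A j := by simp
    rw [h3] at h2
    calc (1 - m) ^ n = ∏ _j ∈ (Finset.univ : Finset (Fin n)), (1 - m) := by
          rw [Finset.prod_const, Finset.card_univ, Fintype.card_fin]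
      _ ≤ _ := h1.trans h2
  -- take n-th roots
  have hU0 : (0:ℝ) ≤ 1 - (P (⋃ j, A j)).toReal :=
    le_trans (pow_nonneg (by linarith) n) hprod
  have hroot : (1 - (P (⋃ j, A j)).toReal) ^ ((1:ℝ)/n) ≥ 1 - m := by
    have h1 : ((1 - m) ^ n : ℝ) ^ ((1:ℝ)/n) ≤ (1 - (P (⋃ j, A j)).toReal) ^ ((1:ℝ)/n) :=
      Real.rpow_le_rpow (pow_nonneg (by linarith) n) hprod (by positivity)
    have h2 : ((1 - m) ^ n : ℝ) ^ ((1:ℝ)/n) = 1 - m := by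
      rw [← Real.rpow_natCast (1 - m) n, ← Real.rpow_mul (by linarith)]
      rw [mul_one_div, div_self (by exact_mod_cast Nat.one_le_iff_ne_zero.mp hn), Real.rpow_one]
    linarith [h2 ▸ h1]
  linarith
end

section
/- Let (p_r)_{r ∈ (0,1]} be a non-decreasing function with values in [0,1], and suppose p_r ≥ c·r for all r ∈ (0,1] and some c > 0, and that p_s ≤ s^{1−ξ₀+o(1)} where F(s) = ∫_s^1 r^{−2} p_r dr = s^{−ξ₀+o(1)} as s → 0 with ξ₀ ∈ [0,1]. Then p_s ≥ s^{1−ξ₀+o(1)} as well; hence p_s = s^{1−ξ₀+o(1)}. -/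
open MeasureTheory Filter

/-- **Matching lower bound for the one-arm probability.** Let `p : (0,1] → [0,1]` be
non-decreasing with `p_r ≥ c·r`, let `F(s) = ∫_s^1 r^{−2} p_r dr` satisfy
`F(s) = s^{−ξ₀+o(1)}` as `s → 0⁺` for some `ξ₀ ∈ [0,1]`, and suppose
`p_s ≤ s^{1−ξ₀+o(1)}` (i.e. for every `ε > 0`, eventually `p_s ≤ s^{1−ξ₀−ε}`).
Then also `p_s ≥ s^{1−ξ₀+o(1)}`; hence `p_s = s^{1−ξ₀+o(1)}`, i.e.
`log p_s / log s → 1 − ξ₀` as `s → 0⁺`. -/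
theorem one_arm_exponent_matching
    (p : ℝ → ℝ) (hmono : MonotoneOn p (Set.Ioc 0 1))
    (hp01 : ∀ r ∈ Set.Ioc (0:ℝ) 1, p r ∈ Set.Icc (0:ℝ) 1)
    (c : ℝ) (hc : 0 < c) (hlow : ∀ r ∈ Set.Ioc (0:ℝ) 1, c * r ≤ p r)
    (F : ℝ → ℝ) (hF : ∀ s ∈ Set.Ioc (0:ℝ) 1, F s = ∫ r in s..1, p r / r ^ 2)
    (ξ₀ : ℝ) (hξ₀ : ξ₀ ∈ Set.Icc (0:ℝ) 1)
    (hFasymp : Tendsto (fun s => Real.log (F s) / Real.log s)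
      (nhdsWithin 0 (Set.Ioi 0)) (nhds (-ξ₀)))
    (hupper : ∀ ε : ℝ, 0 < ε →
      ∀ᶠ s in nhdsWithin (0:ℝ) (Set.Ioi 0), p s ≤ s ^ (1 - ξ₀ - ε)) :
    Tendsto (fun s => Real.log (p s) / Real.log s)
      (nhdsWithin 0 (Set.Ioi 0)) (nhds (1 - ξ₀)) := by
  have hξ0 := hξ₀.1
  have hξ1 := hξ₀.2
  have hIoo : Set.Ioo (0:ℝ) 1 ∈ nhdsWithin (0:ℝ) (Set.Ioi 0) :=
    Ioo_mem_nhdsGT_of_mem ⟨le_rfl, one_pos⟩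
  -- small rpow helper
  have hsmall : ∀ κ C : ℝ, 0 < κ → 0 < C → ∀ᶠ t in nhdsWithin (0:ℝ) (Set.Ioi 0), t ^ κ < C := by
    intro κ C hκ hC
    have hcont := (Real.continuousAt_rpow_const 0 κ (Or.inr hκ.le)).tendsto
    rw [Real.zero_rpow hκ.ne'] at hcont
    exact (hcont.mono_left nhdsWithin_le_nhds).eventually_lt_const hC
  -- integrability
  have hint : ∀ u v : ℝ, 0 < u → u ≤ v → v ≤ 1 →
      IntervalIntegrable (fun r => p r / r ^ 2) volume u v := by
    intro u v hu huv hv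
    have hsub : Set.uIcc u v ⊆ Set.Ioc 0 1 := by
      rw [Set.uIcc_of_le huv]
      intro x hx
      exact ⟨lt_of_lt_of_le hu hx.1, le_trans hx.2 hv⟩
    have h2 := (hmono.mono hsub).intervalIntegrable (μ := volume)
    have h3 : ContinuousOn (fun r : ℝ => (r ^ 2)⁻¹) (Set.uIcc u v) := by
      apply ContinuousOn.inv₀ ((continuous_pow 2).continuousOn)
      intro x hx
      have hx0 := (hsub hx).1
      positivity
    simpa [div_eq_mul_inv] using h2.mul_continuousOn h3
  -- positivity of F
  have hFpos : ∀ u ∈ Set.Ioo (0:ℝ) 1, 0 < F u := by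
    intro u hu
    rw [hF u ⟨hu.1, hu.2.le⟩]
    have h1 : ∫ _r in u..1, (c : ℝ) ≤ ∫ r in u..1, p r / r ^ 2 := by
      apply intervalIntegral.integral_mono_on hu.2.le intervalIntegrable_const
        (hint u 1 hu.1 hu.2.le le_rfl)
      intro r hr
      have hr0 : 0 < r := lt_of_lt_of_le hu.1 hr.1
      have h2 : c * r ≤ p r := hlow r ⟨hr0, hr.2⟩
      rw [le_div_iff₀ (by positivity)]
      nlinarith [mul_nonneg (mul_pos hc hr0).le (sub_nonneg.mpr hr.2)]
    have h2 : ∫ _r in u..1, (c : ℝ) = (1 - u) * c := by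
      rw [intervalIntegral.integral_const]; simp [smul_eq_mul]
    nlinarith [hu.1, hu.2]
  -- key inequality
  have key : ∀ s t : ℝ, 0 < s → s < t → t ≤ 1 → s ^ 2 / t * (F s - F t) ≤ p t := by
    intro s t hs hst ht1
    have ht0 : 0 < t := hs.trans hst
    have hs1 : s ≤ 1 := le_trans hst.le ht1
    have i1 := hint s t hs hst.le ht1
    have i2 := hint t 1 ht0 ht1 le_rfl
    have heq : ∫ r in s..t, p r / r ^ 2 = F s - F t := by
      rw [hF s ⟨hs, hs1⟩, hF t ⟨ht0, ht1⟩]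
      have := intervalIntegral.integral_add_adjacent_intervals i1 i2
      linarith
    have hp0 : 0 ≤ p t := (hp01 t ⟨ht0, ht1⟩).1
    have hb : ∫ r in s..t, p r / r ^ 2 ≤ ∫ _r in s..t, p t / s ^ 2 := by
      apply intervalIntegral.integral_mono_on hst.le i1 intervalIntegrable_const
      intro r hr
      have hr0 : 0 < r := lt_of_lt_of_le hs hr.1
      have hpr : p r ≤ p t := hmono ⟨hr0, le_trans hr.2 ht1⟩ ⟨ht0, ht1⟩ hr.2
      exact div_le_div₀ hp0 hpr (by positivity) (by nlinarith [hr.1])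
    have hconst : ∫ _r in s..t, p t / s ^ 2 = (t - s) * (p t / s ^ 2) := by
      rw [intervalIntegral.integral_const]; simp [smul_eq_mul]
    have hFst : F s - F t ≤ (t - s) * (p t / s ^ 2) := by
      rw [← heq, ← hconst]; exact hb
    have h2 : s ^ 2 / t * ((t - s) * (p t / s ^ 2)) ≤ p t := by
      rw [div_mul_eq_mul_div, div_le_iff₀ ht0]
      have hs2 : s ^ 2 ≠ 0 := by positivity
      field_simp
      nlinarith [sq_nonneg s, mul_nonneg hp0 (sq_nonneg s)]
    calc s ^ 2 / t * (F s - F t) ≤ s ^ 2 / t * ((t - s) * (p t / s ^ 2)) :=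
          mul_le_mul_of_nonneg_left hFst (by positivity)
      _ ≤ p t := h2
  -- lower bound claim
  have hlower : ∀ ε : ℝ, 0 < ε → ∀ᶠ s in nhdsWithin (0:ℝ) (Set.Ioi 0),
      s ^ (1 - ξ₀ + ε) ≤ p s := by
    suffices h : ∀ ε : ℝ, 0 < ε → ε ≤ 1 → ∀ᶠ s in nhdsWithin (0:ℝ) (Set.Ioi 0),
        s ^ (1 - ξ₀ + ε) ≤ p s by
      intro ε hε
      rcases le_or_gt ε 1 with h1 | h1
      · exact h ε hε h1
      · filter_upwards [h 1 one_pos le_rfl, hIoo] with s h2 hs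
        exact le_trans (Real.rpow_le_rpow_of_exponent_ge hs.1 hs.2.le (by linarith)) h2
    intro ε hε hε1
    rcases hξ0.eq_or_lt with hz | hz
    · -- ξ₀ = 0
      filter_upwards [hsmall ε c hε hc, hIoo] with s h1 hs
      have h2 : s ^ (1 - ξ₀ + ε) = s * s ^ ε := by
        rw [← hz, show (1:ℝ) - 0 + ε = 1 + ε by ring, Real.rpow_add hs.1, Real.rpow_one]
      rw [h2]
      calc s * s ^ ε ≤ s * c := by nlinarith [hs.1]
        _ = c * s := mul_comm _ _
        _ ≤ p s := hlow s ⟨hs.1, hs.2.le⟩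
    · -- ξ₀ > 0
      set η : ℝ := ε / 4 with hη
      set a : ℝ := 1 + η with haa
      set δ : ℝ := ε * ξ₀ / 16 with hδδ
      have hη0 : 0 < η := by positivity
      have ha1 : 1 < a := by simp [haa]; positivity
      have hδ0 : 0 < δ := by positivity
      have hδξ : δ < ξ₀ := by nlinarith
      set b : ℝ := a * (ξ₀ - δ) with hbb
      have hbgt : ξ₀ + δ < b := by
        simp only [hbb, haa, hη, hδδ]; nlinarith
      set q : ℝ := a * (2 - ξ₀ + δ) - 1 with hqq
      have hq : q < 1 - ξ₀ + ε := by
        simp only [hqq, haa, hη, hδδ]; nlinarith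
      -- two-sided bounds on F from hFasymp
      have hA : ∀ᶠ u in nhdsWithin (0:ℝ) (Set.Ioi 0),
          u ^ (-ξ₀ + δ) ≤ F u ∧ F u ≤ u ^ (-ξ₀ - δ) := by
        have h1 := Metric.tendsto_nhds.mp hFasymp δ hδ0
        filter_upwards [h1, hIoo] with u hd hu
        have hu0 : 0 < u := hu.1
        have hlog : Real.log u < 0 := Real.log_neg hu0 hu.2
        have hFu : 0 < F u := hFpos u hu
        rw [Real.dist_eq, abs_lt] at hd
        have hub : Real.log (F u) / Real.log u < -ξ₀ + δ := by linarith [hd.2]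
        have hlb : -ξ₀ - δ < Real.log (F u) / Real.log u := by linarith [hd.1]
        have h2 : (-ξ₀ + δ) * Real.log u < Real.log (F u) :=
          (div_lt_iff_of_neg hlog).mp hub
        have h3 : Real.log (F u) < (-ξ₀ - δ) * Real.log u :=
          (lt_div_iff_of_neg hlog).mp hlb
        constructor
        · rw [Real.rpow_def_of_pos hu0, ← Real.exp_log hFu]
          exact Real.exp_le_exp.mpr (by rw [mul_comm]; linarith)
        · rw [Real.rpow_def_of_pos hu0, ← Real.exp_log hFu]
          exact Real.exp_le_exp.mpr (by rw [mul_comm]; linarith)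
      -- pull back hA along t ↦ t^a
      have hmap : Tendsto (fun t : ℝ => t ^ a) (nhdsWithin (0:ℝ) (Set.Ioi 0))
          (nhdsWithin (0:ℝ) (Set.Ioi 0)) := by
        rw [tendsto_nhdsWithin_iff]
        constructor
        · have hcont := (Real.continuousAt_rpow_const 0 a (Or.inr (by linarith))).tendsto
          rw [Real.zero_rpow (by linarith : a ≠ 0)] at hcont
          exact hcont.mono_left nhdsWithin_le_nhds
        · filter_upwards [self_mem_nhdsWithin] with t ht
          exact Real.rpow_pos_of_pos ht a
      filter_upwards [hA, hmap.eventually hA,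
        hsmall (b - ξ₀ - δ) (1/2) (by linarith) (by norm_num),
        hsmall (1 - ξ₀ + ε - q) (1/2) (by linarith) (by norm_num),
        hIoo] with t h2 h3 h4 h5 ht
      have ht0 : 0 < t := ht.1
      have ht1 : t < 1 := ht.2
      have hs0 : 0 < t ^ a := Real.rpow_pos_of_pos ht0 a
      have hst : t ^ a < t := by
        have := Real.rpow_lt_rpow_of_exponent_gt ht0 ht1 ha1
        rwa [Real.rpow_one] at this
      have hkey := key (t ^ a) t hs0 hst ht1.le
      have hFs : t ^ (-b) ≤ F (t ^ a) := by
        have h6 := h3.1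
        rwa [← Real.rpow_mul ht0.le, show a * (-ξ₀ + δ) = -b by rw [hbb]; ring] at h6
      have hFt : F t ≤ t ^ (-ξ₀ - δ) := h2.2
      have h6 : t ^ (-ξ₀ - δ) ≤ 1 / 2 * t ^ (-b) := by
        have h7 : t ^ (-ξ₀ - δ) = t ^ (b - ξ₀ - δ) * t ^ (-b) := by
          rw [← Real.rpow_add ht0]; ring_nf
        rw [h7]
        exact mul_le_mul_of_nonneg_right h4.le (Real.rpow_pos_of_pos ht0 _).le
      have h7 : 1 / 2 * t ^ (-b) ≤ F (t ^ a) - F t := by linarith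
      have h8 : 1 / 2 * t ^ q ≤ p t := by
        have hsq : (t ^ a) ^ 2 / t * (1 / 2 * t ^ (-b)) = 1 / 2 * t ^ q := by
          have e1 : (t ^ a) ^ 2 = t ^ (a * 2) := by
            rw [Real.rpow_mul ht0.le, Real.rpow_two]
            try ring
          rw [e1, div_mul_eq_mul_div, div_eq_mul_inv, ← Real.rpow_neg_one t,
            show t ^ (a*2) * (1/2 * t ^ (-b)) * t ^ (-1:ℝ)
              = 1/2 * (t ^ (a*2) * t ^ (-b) * t ^ (-1:ℝ)) from by ring,
            ← Real.rpow_add ht0, ← Real.rpow_add ht0,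
            show a * 2 + -b + -1 = q from by rw [hqq, hbb]; ring]
        calc 1 / 2 * t ^ q = (t ^ a) ^ 2 / t * (1 / 2 * t ^ (-b)) := hsq.symm
          _ ≤ (t ^ a) ^ 2 / t * (F (t ^ a) - F t) :=
              mul_le_mul_of_nonneg_left h7 (by positivity)
          _ ≤ p t := hkey
      calc t ^ (1 - ξ₀ + ε) = t ^ (1 - ξ₀ + ε - q) * t ^ q := by
            rw [← Real.rpow_add ht0]; ring_nf
        _ ≤ 1 / 2 * t ^ q :=
            mul_le_mul_of_nonneg_right h5.le (Real.rpow_pos_of_pos ht0 _).le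
        _ ≤ p t := h8
  -- conclusion
  rw [Metric.tendsto_nhds]
  intro ε hε
  filter_upwards [hupper (ε/2) (by positivity), hlower (ε/2) (by positivity), hIoo]
    with s hu hl hs
  have hs0 : 0 < s := hs.1
  have hlogs : Real.log s < 0 := Real.log_neg hs0 hs.2
  have hps : 0 < p s := lt_of_lt_of_le (by positivity) (hlow s ⟨hs0, hs.2.le⟩)
  have hub : Real.log (p s) ≤ (1 - ξ₀ - ε/2) * Real.log s := by
    calc Real.log (p s) ≤ Real.log (s ^ (1 - ξ₀ - ε/2)) := Real.log_le_log hps hu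
      _ = (1 - ξ₀ - ε/2) * Real.log s := Real.log_rpow hs0 _
  have hlb : (1 - ξ₀ + ε/2) * Real.log s ≤ Real.log (p s) := by
    calc (1 - ξ₀ + ε/2) * Real.log s = Real.log (s ^ (1 - ξ₀ + ε/2)) :=
          (Real.log_rpow hs0 _).symm
      _ ≤ Real.log (p s) := Real.log_le_log (Real.rpow_pos_of_pos hs0 _) hl
  have h1 : 1 - ξ₀ - ε/2 ≤ Real.log (p s) / Real.log s :=
    (le_div_iff_of_neg hlogs).mpr hub
  have h2 : Real.log (p s) / Real.log s ≤ 1 - ξ₀ + ε/2 :=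
    (div_le_iff_of_neg hlogs).mpr hlb
  rw [Real.dist_eq, abs_lt]
  constructor <;> linarith
end
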